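/- Fix a (θ,α,β)-self-determined community S with γ = α − β and t = |S|, and let S₁ ⊆ V satisfy |S₁| ≤ Mθt (for some M ≥ 1) and |S \ S₁| ≤ γt/16; set S̃ = S ∩ S₁. Let δ ∈ (0,1) and let U be a multiset of k = ⌈8 ln(32θM/(δγ))/γ²⌉ points drawn independently and uniformly at random from S̃, and let S₂ = {i ∈ S₁ : v^{⌈θt⌉}_U(i) ≥ (α − γ/2)k}, where votes from U are counted with multiplicity. Then with probability at least 1 − δ the symmetric difference satisfies |Δ(S₂, S)| ≤ γt/8. -/

import Mathlib

open Finset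
open scoped symmDiff

def topSet (n : ℕ) (π : Fin n → Equiv.Perm (Fin n)) (s : Fin n) (t : ℕ) : Finset (Fin n) :=
  Finset.univ.filter (fun x => ((π s).symm x : ℕ) < t)

def votes (n : ℕ) (π : Fin n → Equiv.Perm (Fin n)) (S : Finset (Fin n)) (t : ℕ)
    (i : Fin n) : ℕ :=
  (S.filter (fun s => i ∈ topSet n π s t)).card

def IsCommunity (n : ℕ) (π : Fin n → Equiv.Perm (Fin n)) (θ α β : ℝ)
    (S : Finset (Fin n)) : Prop :=
  (∀ i ∈ S, α * S.card ≤ (votes n π S ⌈θ * S.card⌉₊ i : ℝ)) ∧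
  (∀ j, j ∉ S → (votes n π S ⌈θ * S.card⌉₊ j : ℝ) ≤ β * S.card)

/-- The number of coordinates of the tuple `u` (draws counted with multiplicity) whose
top-`T` list contains `i`. -/
def tupleVotes (n : ℕ) (π : Fin n → Equiv.Perm (Fin n)) (k : ℕ) (u : Fin k → Fin n)
    (T : ℕ) (i : Fin n) : ℕ :=
  (Finset.univ.filter (fun j : Fin k => i ∈ topSet n π (u j) T)).card

/-- The purified set `S₂` obtained from the sample `u` drawn from `S̃`. -/
noncomputable def purified (n : ℕ) (π : Fin n → Equiv.Perm (Fin n)) (k : ℕ) (u : Fin k → Fin n)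
    (T : ℕ) (S₁ : Finset (Fin n)) (α γ : ℝ) : Finset (Fin n) :=
  S₁.filter (fun i => (α - γ / 2) * k ≤ (tupleVotes n π k u T i : ℝ))

/-!
A sample is a tuple `u ∈ S̃ᵏ`, and probabilities are proportions of such tuples. Fix `i ∈ S₁`. The
votes `i` receives from the sample form a sum of `k` independent indicators whose mean is the
fraction `pᵢ` of `S̃` ranking `i` in its top `⌈θt⌉`. Since `S̃` misses at most `γt/16` elements
of `S`, `pᵢ ≥ α - γ/4` when `i ∈ S` and `pᵢ ≤ β + γ/4` when `i ∉ S`, so misclassifying `i`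
takes a deviation of `γk/4` from the mean, which by Hoeffding's inequality happens with
probability at most `exp (-γ²k/8) ≤ δγ/(32θM)`. Over the at most `Mθt` elements of `S₁` the
expected number of misclassified ones is at most `δγt/32`, so by Markov's inequality it exceeds
`γt/16` with probability at most `δ/2`. Outside `S₁` the two sets differ only on `S \ S₁`, which
has at most `γt/16` elements.
-/

theorem exp_neg_mul_le_inv_of_log_div_le {c L x : ℝ} (hc : 0 < c) (hL : 0 < L)
    (hx : Real.log L / c ≤ x) : Real.exp (-(c * x)) ≤ L⁻¹ := by
  rw [div_le_iff₀' hc] at hx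
  rw [← Real.exp_log hL, ← Real.exp_neg]
  gcongr

section Hoeffding

open MeasureTheory ProbabilityTheory

variable {ι : Type*} [Fintype ι] [DecidableEq ι]

theorem integral_uniformOn_finset [MeasurableSpace ι] [DiscreteMeasurableSpace ι]
    (W : Finset ι) (f : ι → ℝ) : ∫ x, f x ∂uniformOn (W : Set ι) = (∑ s ∈ W, f s) / #W := by
  have h (x : ι) : (uniformOn (W : Set ι)).real {x} = if x ∈ W then (#W : ℝ)⁻¹ else 0 := by
    rw [measureReal_def, ← coe_singleton, uniformOn_apply_finset]
    split_ifs with hx <;> simp [hx]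
  simp_rw [integral_fintype (.of_finite), h, ite_smul, zero_smul, sum_ite_mem, univ_inter,
    smul_eq_mul, ← mul_sum, inv_mul_eq_div]

theorem card_filter_piFinset_le_of_mem_Icc (W : Finset ι) (hW : W.Nonempty) {f : ι → ℝ}
    {a b : ℝ} (hf : ∀ s ∈ W, f s ∈ Set.Icc a b) (k : ℕ) {ε : ℝ} (hε : 0 ≤ ε) :
    (#{u ∈ Fintype.piFinset (fun _ : Fin k => W) |
        ε ≤ ∑ j, (f (u j) - (∑ s ∈ W, f s) / #W)} : ℝ) ≤
      #W ^ k * Real.exp (-2 * ε ^ 2 / (k * (b - a) ^ 2)) := by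
  let _ : MeasurableSpace ι := ⊤
  have _ : IsProbabilityMeasure (uniformOn (W : Set ι)) :=
    isProbabilityMeasure_uniformOn W.finite_toSet hW
  set c := (∑ s ∈ W, f s) / #W
  set A := Fintype.piFinset (fun _ : Fin k => W)
  set μ := Measure.pi fun _ : Fin k => uniformOn (W : Set ι)
  have hμ : uniformOn (A : Set (Fin k → ι)) = μ := by rw [Fintype.coe_piFinset, uniformOn_pi]
  have hsubG (j : Fin k) :
      HasSubgaussianMGF (fun u => f (u j) - c) ((‖b - a‖₊ / 2) ^ 2) μ := by
    have hmean : μ[fun u => f (u j)] = c :=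
      (integral_comp_eval Measurable.of_discrete.aestronglyMeasurable).trans
        (integral_uniformOn_finset W f)
    rw [← hmean]
    refine hasSubgaussianMGF_of_mem_Icc
      (Measurable.of_discrete.comp (measurable_pi_apply j)).aemeasurable ?_
    rw [← hμ]
    filter_upwards [ae_cond_mem A.measurableSet] with u hu
    exact hf _ (Fintype.mem_piFinset.1 hu j)
  have hindep : iIndepFun (fun j (u : Fin k → ι) => f (u j) - c) μ :=
    iIndepFun_pi (X := fun _ x => f x - c) fun _ => Measurable.of_discrete.aemeasurable
  have hcount : μ.real {u | ε ≤ ∑ j, (f (u j) - c)} =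
      #{u ∈ A | ε ≤ ∑ j, (f (u j) - c)} / #W ^ k := by
    rw [← hμ, measureReal_def, ← coe_filter_univ, uniformOn_apply_finset, inter_filter,
      inter_univ, Fintype.card_piFinset_const, ENNReal.toReal_div]
    push_cast
    rfl
  have hexp : Real.exp (-ε ^ 2 / (2 * ((∑ _j : Fin k, (‖b - a‖₊ / 2) ^ 2 : NNReal) : ℝ))) =
      Real.exp (-2 * ε ^ 2 / (k * (b - a) ^ 2)) := by
    congr 1
    push_cast
    rw [sum_const, card_univ, Fintype.card_fin, nsmul_eq_mul, Real.norm_eq_abs, div_pow, sq_abs,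
      show 2 * (k * ((b - a) ^ 2 / 2 ^ 2)) = k * (b - a) ^ 2 / 2 by ring, div_div_eq_mul_div]
    ring
  have hW' : (0 : ℝ) < #W ^ k := by have := hW.card_pos; positivity
  rw [← div_le_iff₀' hW', ← hcount, ← hexp]
  exact HasSubgaussianMGF.measure_sum_ge_le_of_iIndepFun (s := univ) hindep
    (fun j _ => hsubG j) hε

theorem card_filter_piFinset_le_exp_of_add_mul_le (W : Finset ι) (hW : W.Nonempty)
    (Q : ι → Prop) [DecidablePred Q] (k : ℕ) {ε : ℝ} (hε : 0 ≤ ε) :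
    (#{u ∈ Fintype.piFinset (fun _ : Fin k => W) |
        (#{s ∈ W | Q s} / #W + ε) * k ≤ #{j | Q (u j)}} : ℝ) ≤
      #W ^ k * Real.exp (-2 * ε ^ 2 * k) := by
  have h := card_filter_piFinset_le_of_mem_Icc W hW (f := fun s => if Q s then (1 : ℝ) else 0)
    (a := 0) (b := 1) (fun s _ => by split_ifs <;> simp) k (ε := ε * k) (by positivity)
  have hexp : -2 * (ε * k) ^ 2 / (k * (1 - 0) ^ 2) = -2 * ε ^ 2 * k := by
    rcases k.eq_zero_or_pos with rfl | hk
    · simp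
    · norm_num; field_simp
  rw [hexp] at h
  refine le_trans (Nat.cast_le.2 (card_le_card (monotone_filter_right _ fun u _ hu => ?_))) h
  simp only [sum_sub_distrib, sum_boole, sum_const, card_univ, Fintype.card_fin, nsmul_eq_mul]
  linarith

theorem card_filter_piFinset_le_exp_of_le_sub_mul (W : Finset ι) (hW : W.Nonempty)
    (Q : ι → Prop) [DecidablePred Q] (k : ℕ) {ε : ℝ} (hε : 0 ≤ ε) :
    (#{u ∈ Fintype.piFinset (fun _ : Fin k => W) |
        (#{j | Q (u j)} : ℝ) ≤ (#{s ∈ W | Q s} / #W - ε) * k} : ℝ) ≤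
      #W ^ k * Real.exp (-2 * ε ^ 2 * k) := by
  have h := card_filter_piFinset_le_of_mem_Icc W hW (f := fun s => -if Q s then (1 : ℝ) else 0)
    (a := -1) (b := 0) (fun s _ => by split_ifs <;> simp) k (ε := ε * k) (by positivity)
  have hexp : -2 * (ε * k) ^ 2 / (k * (0 - -1) ^ 2) = -2 * ε ^ 2 * k := by
    rcases k.eq_zero_or_pos with rfl | hk
    · simp
    · norm_num; field_simp
  rw [hexp] at h
  refine le_trans (Nat.cast_le.2 (card_le_card (monotone_filter_right _ fun u _ hu => ?_))) h
  simp only [sum_sub_distrib, sum_neg_distrib, neg_div, sum_boole, sum_const, card_univ,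
    Fintype.card_fin, nsmul_eq_mul]
  linarith

end Hoeffding

theorem card_symmDiff_le_card_sdiff_add {α : Type*} [DecidableEq α] {P S S₁ : Finset α}
    (hP : P ⊆ S₁) : #(P ∆ S) ≤ #(S \ S₁) + #{i ∈ S₁ | i ∈ P ∆ S} := by
  refine (card_le_card fun x hx => ?_).trans (card_union_le _ _)
  by_cases hx₁ : x ∈ S₁
  · exact mem_union_right _ (mem_filter.2 ⟨hx₁, hx⟩)
  · have hxP : x ∉ P := fun h => hx₁ (hP h)
    exact mem_union_left _ (mem_sdiff.2 ⟨by simpa [mem_symmDiff, hxP] using hx, hx₁⟩)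

theorem card_filter_lt_card_filter_le {α β : Type*} (A : Finset α) (E : Finset β)
    (R : α → β → Prop) [∀ a b, Decidable (R a b)] {c B : ℝ} (hc : 0 < c)
    (hB : ∀ b ∈ E, (#{a ∈ A | R a b} : ℝ) ≤ B) :
    (#{a ∈ A | c < #{b ∈ E | R a b}} : ℝ) ≤ #E * B / c := by
  have hswap : ∑ a ∈ A, (#{b ∈ E | R a b} : ℝ) = ∑ b ∈ E, (#{a ∈ A | R a b} : ℝ) := by
    exact_mod_cast sum_card_bipartiteAbove_eq_sum_card_bipartiteBelow (s := A) (t := E) R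
  rw [le_div_iff₀ hc]
  calc (#{a ∈ A | c < #{b ∈ E | R a b}} : ℝ) * c
      = ∑ a ∈ A with c < #{b ∈ E | R a b}, c := by rw [sum_const, nsmul_eq_mul]
    _ ≤ ∑ a ∈ A with c < #{b ∈ E | R a b}, (#{b ∈ E | R a b} : ℝ) :=
        sum_le_sum fun a ha => (mem_filter.1 ha).2.le
    _ ≤ ∑ a ∈ A, (#{b ∈ E | R a b} : ℝ) :=
        sum_le_sum_of_subset_of_nonneg (filter_subset _ _) fun _ _ _ => by positivity
    _ ≤ ∑ _b ∈ E, B := hswap ▸ sum_le_sum hB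
    _ = #E * B := by rw [sum_const, nsmul_eq_mul]

section Purification

variable {n : ℕ} {π : Fin n → Equiv.Perm (Fin n)}

theorem votes_mono {S S' : Finset (Fin n)} (h : S' ⊆ S) (T : ℕ) (i : Fin n) :
    votes n π S' T i ≤ votes n π S T i :=
  card_le_card (filter_subset_filter _ h)

theorem votes_le_votes_inter_add_card_sdiff (S S₁ : Finset (Fin n)) (T : ℕ) (i : Fin n) :
    votes n π S T i ≤ votes n π (S ∩ S₁) T i + #(S \ S₁) := by
  refine (card_le_card fun s hs => ?_).trans (card_union_le _ (S \ S₁))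
  simp only [mem_union, mem_filter, mem_inter, mem_sdiff] at hs ⊢
  tauto

variable {θ α β γ : ℝ} {S S₁ : Finset (Fin n)}

theorem one_sub_mul_card_le_card_inter (hcover : (#(S \ S₁) : ℝ) ≤ γ * #S / 16) :
    (1 - γ / 16) * #S ≤ #(S ∩ S₁) := by
  have hsplit : (#(S ∩ S₁) + #(S \ S₁) : ℝ) = #S := by
    exact_mod_cast card_inter_add_card_sdiff S S₁
  linarith

theorem IsCommunity.le_votes_inter_div (hS : IsCommunity n π θ α β S) (hβ : 0 ≤ β)
    (hβα : β < α) (hα : α ≤ 1) (hγ : γ = α - β) (hcover : (#(S \ S₁) : ℝ) ≤ γ * #S / 16)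
    {i : Fin n} (hi : i ∈ S) : α - γ / 4 ≤ votes n π (S ∩ S₁) ⌈θ * #S⌉₊ i / #(S ∩ S₁) := by
  have hm := one_sub_mul_card_le_card_inter hcover
  have hvotes : (votes n π S ⌈θ * #S⌉₊ i : ℝ) ≤
      votes n π (S ∩ S₁) ⌈θ * #S⌉₊ i + #(S \ S₁) := by
    exact_mod_cast votes_le_votes_inter_add_card_sdiff S S₁ _ i
  have ht : (0 : ℝ) < #S := by exact_mod_cast card_pos.2 ⟨i, hi⟩
  have hmt : (#(S ∩ S₁) : ℝ) ≤ #S := by exact_mod_cast card_le_card inter_subset_left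
  rw [le_div_iff₀ (by nlinarith)]
  nlinarith [hS.1 i hi, mul_le_mul_of_nonneg_left hmt (by linarith : 0 ≤ α - γ / 4)]

theorem IsCommunity.votes_inter_div_le (hS : IsCommunity n π θ α β S) (hβ : 0 ≤ β)
    (hβα : β < α) (hα : α ≤ 1) (hγ : γ = α - β) (hcover : (#(S \ S₁) : ℝ) ≤ γ * #S / 16)
    {i : Fin n} (hi : i ∉ S) : votes n π (S ∩ S₁) ⌈θ * #S⌉₊ i / #(S ∩ S₁) ≤ β + γ / 4 := by
  have hm := one_sub_mul_card_le_card_inter hcover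
  have hvotes : (votes n π (S ∩ S₁) ⌈θ * #S⌉₊ i : ℝ) ≤ votes n π S ⌈θ * #S⌉₊ i := by
    exact_mod_cast votes_mono inter_subset_left _ i
  rcases (Nat.zero_le #(S ∩ S₁)).eq_or_lt with hm0 | hm0
  · rw [← hm0, Nat.cast_zero, div_zero]; linarith
  rw [div_le_iff₀ (by exact_mod_cast hm0)]
  nlinarith [hS.2 i hi]

theorem IsCommunity.card_filter_mem_symmDiff_purified_le (hS : IsCommunity n π θ α β S)
    (hβ : 0 ≤ β) (hβα : β < α) (hα : α ≤ 1) (hγ : γ = α - β)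
    (hcover : (#(S \ S₁) : ℝ) ≤ γ * #S / 16) (hW : (S ∩ S₁).Nonempty) (k : ℕ) {i : Fin n}
    (hi : i ∈ S₁) :
    (#{u ∈ Fintype.piFinset (fun _ : Fin k => S ∩ S₁) |
        i ∈ purified n π k u ⌈θ * #S⌉₊ S₁ α γ ∆ S} : ℝ) ≤
      #(S ∩ S₁) ^ k * Real.exp (-(γ ^ 2 / 8 * k)) := by
  set T := ⌈θ * #S⌉₊
  have hmem (u : Fin k → Fin n) :
      i ∈ purified n π k u T S₁ α γ ↔ (α - γ / 2) * k ≤ tupleVotes n π k u T i := by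
    simp [purified, hi]
  have hk : (0 : ℝ) ≤ k := k.cast_nonneg
  rw [show -(γ ^ 2 / 8 * k) = -2 * (γ / 4) ^ 2 * k by ring]
  by_cases hiS : i ∈ S
  · have hp := hS.le_votes_inter_div hβ hβα hα hγ hcover hiS
    refine le_trans (Nat.cast_le.2 (card_le_card (monotone_filter_right _ fun u _ hu => ?_)))
      (card_filter_piFinset_le_exp_of_le_sub_mul _ hW (fun s => i ∈ topSet n π s T) k
        (by linarith))
    simp only [mem_symmDiff, hmem, hiS, not_true, and_false, true_and, false_or, not_le] at hu
    unfold votes at hp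
    unfold tupleVotes at hu
    nlinarith
  · have hp := hS.votes_inter_div_le hβ hβα hα hγ hcover hiS
    refine le_trans (Nat.cast_le.2 (card_le_card (monotone_filter_right _ fun u _ hu => ?_)))
      (card_filter_piFinset_le_exp_of_add_mul_le _ hW (fun s => i ∈ topSet n π s T) k
        (by linarith))
    simp only [mem_symmDiff, hmem, hiS, not_false_eq_true, and_true, false_and, or_false] at hu
    unfold votes at hp
    unfold tupleVotes at hu
    nlinarith

theorem IsCommunity.card_filter_lt_card_symmDiff_purified_le (hS : IsCommunity n π θ α β S)
    (hβ : 0 ≤ β) (hβα : β < α) (hα : α ≤ 1) (hγ : γ = α - β)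
    (hcover : (#(S \ S₁) : ℝ) ≤ γ * #S / 16) (hSne : S.Nonempty) (k : ℕ) :
    (#{u ∈ Fintype.piFinset (fun _ : Fin k => S ∩ S₁) |
        γ * #S / 8 < #(purified n π k u ⌈θ * #S⌉₊ S₁ α γ ∆ S)} : ℝ) ≤
      16 * #S₁ * Real.exp (-(γ ^ 2 / 8 * k)) / (γ * #S) * #(S ∩ S₁) ^ k := by
  have hγ0 : 0 < γ := by linarith
  have ht : (0 : ℝ) < #S := by exact_mod_cast hSne.card_pos
  have hW : (S ∩ S₁).Nonempty := by
    rw [← card_pos, ← Nat.cast_pos (α := ℝ)]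
    nlinarith [one_sub_mul_card_le_card_inter hcover]
  calc _ ≤ (#{u ∈ Fintype.piFinset (fun _ : Fin k => S ∩ S₁) | γ * #S / 16 <
          #{i ∈ S₁ | i ∈ purified n π k u ⌈θ * #S⌉₊ S₁ α γ ∆ S}} : ℝ) := by
        refine Nat.cast_le.2 (card_le_card (monotone_filter_right _ fun u _ hu => ?_))
        have hΔ : (#(purified n π k u ⌈θ * #S⌉₊ S₁ α γ ∆ S) : ℝ) ≤
            #(S \ S₁) + #{i ∈ S₁ | i ∈ purified n π k u ⌈θ * #S⌉₊ S₁ α γ ∆ S} := by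
          exact_mod_cast card_symmDiff_le_card_sdiff_add (filter_subset _ S₁)
        linarith
    _ ≤ #S₁ * (#(S ∩ S₁) ^ k * Real.exp (-(γ ^ 2 / 8 * k))) / (γ * #S / 16) :=
        card_filter_lt_card_filter_le _ S₁ _ (by positivity) fun i hi =>
          hS.card_filter_mem_symmDiff_purified_le hβ hβα hα hγ hcover hW k hi
    _ = _ := by ring

end Purification

theorem stmt_3_general (n : ℕ) (π : Fin n → Equiv.Perm (Fin n)) (θ α β γ δ : ℝ)
    (hθ : 0 < θ) (hβ : 0 ≤ β) (hβα : β < α) (hα : α ≤ 1) (hγ : γ = α - β)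
    (hδ0 : 0 < δ)
    (S S₁ : Finset (Fin n)) (t : ℕ) (ht : t = S.card)
    (hS : IsCommunity n π θ α β S)
    (M : ℝ) (hM : 1 ≤ M)
    (hS₁card : (S₁.card : ℝ) ≤ M * θ * t)
    (hcover : ((S \ S₁).card : ℝ) ≤ γ * t / 16)
    (k : ℕ) (hk : k = ⌈8 * Real.log (32 * θ * M / (δ * γ)) / γ ^ 2⌉₊) :
    (1 - δ) *
      (((Finset.univ : Finset (Fin k → Fin n)).filter
          (fun u => ∀ j, u j ∈ S ∩ S₁)).card : ℝ) ≤
    (((Finset.univ : Finset (Fin k → Fin n)).filter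
        (fun u => (∀ j, u j ∈ S ∩ S₁) ∧
          (((purified n π k u ⌈θ * (t : ℝ)⌉₊ S₁ α γ ∆ S).card : ℝ) ≤ γ * t / 8))).card : ℝ) := by
  classical
  subst ht
  set A := univ.filter fun u : Fin k → Fin n => ∀ j, u j ∈ S ∩ S₁
  have hA : A = Fintype.piFinset fun _ => S ∩ S₁ := by ext u; simp [A, Fintype.mem_piFinset]
  suffices hbad : (#{u ∈ A | γ * #S / 8 < #(purified n π k u ⌈θ * #S⌉₊ S₁ α γ ∆ S)} : ℝ) ≤
      δ * #A by
    have hsplit := card_filter_add_card_filter_not (s := A)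
      (p := fun u => (#(purified n π k u ⌈θ * #S⌉₊ S₁ α γ ∆ S) : ℝ) ≤ γ * #S / 8)
    simp only [not_le] at hsplit
    rw [← filter_filter]
    push_cast [← hsplit] at hbad ⊢
    linarith
  obtain rfl | hSne := S.eq_empty_or_nonempty
  · obtain rfl : S₁ = ∅ := by simpa using hS₁card
    simpa [purified] using mul_nonneg hδ0.le (Nat.cast_nonneg #A)
  have hγ0 : 0 < γ := by linarith
  have hL : 0 < 32 * θ * M / (δ * γ) := by positivity
  have hexp := exp_neg_mul_le_inv_of_log_div_le (c := γ ^ 2 / 8) (by positivity) hL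
    (x := k) (by rw [hk, div_div_eq_mul_div, mul_comm]; exact Nat.le_ceil _)
  rw [inv_div] at hexp
  calc _ ≤ 16 * #S₁ * Real.exp (-(γ ^ 2 / 8 * k)) / (γ * #S) * #A := by
        rw [hA, Fintype.card_piFinset_const, Nat.cast_pow]
        exact hS.card_filter_lt_card_symmDiff_purified_le hβ hβα hα hγ hcover hSne k
    _ ≤ 16 * (M * θ * #S) * (δ * γ / (32 * θ * M)) / (γ * #S) * #A := by gcongr
    _ = δ / 2 * #A := by field_simp; ring
    _ ≤ δ * #A := by gcongr; linarith

theorem stmt_3 (n : ℕ) (π : Fin n → Equiv.Perm (Fin n)) (θ α β γ δ : ℝ)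
    (hθ : 0 < θ) (hβ : 0 ≤ β) (hβα : β < α) (hα : α ≤ 1) (hγ : γ = α - β)
    (hδ0 : 0 < δ) (hδ1 : δ < 1)
    (S S₁ : Finset (Fin n)) (t : ℕ) (ht : t = S.card)
    (hS : IsCommunity n π θ α β S)
    (M : ℝ) (hM : 1 ≤ M)
    (hS₁card : (S₁.card : ℝ) ≤ M * θ * t)
    (hcover : ((S \ S₁).card : ℝ) ≤ γ * t / 16)
    (k : ℕ) (hk : k = ⌈8 * Real.log (32 * θ * M / (δ * γ)) / γ ^ 2⌉₊) :
    (1 - δ) *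
      (((Finset.univ : Finset (Fin k → Fin n)).filter
          (fun u => ∀ j, u j ∈ S ∩ S₁)).card : ℝ) ≤
    (((Finset.univ : Finset (Fin k → Fin n)).filter
        (fun u => (∀ j, u j ∈ S ∩ S₁) ∧
          (((purified n π k u ⌈θ * (t : ℝ)⌉₊ S₁ α γ ∆ S).card : ℝ) ≤ γ * t / 8))).card : ℝ) :=
  stmt_3_general n π θ α β γ δ hθ hβ hβα hα hγ hδ0 S S₁ t ht hS M hM hS₁card hcover k hk
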